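/- arXiv:0805.1964 — 2 statements merged into one kernel-verified Lean document; each statement's English description precedes it below -/
import Mathlib

section
/- The number of alternating, 132-avoiding permutations of length 2n+1 equals the n-th Catalan number C_n, and hence equals the number of 132-avoiding permutations of length n. -/
open Equiv

/-- The word `w` contains the pattern `p`: some subsequence of `w` is
order-isomorphic to `p`. -/
def Contains {α β : Type*} [LT α] [LT β] {n k : ℕ} (w : Fin n → α) (p : Fin k → β) : Prop :=
  ∃ f : Fin k → Fin n, StrictMono f ∧ ∀ i j : Fin k, p i < p j ↔ w (f i) < w (f j)

/-- The pattern 132 (written with 0-indexed values as (0,2,1)). -/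
def pat132 : Fin 3 → ℕ := ![0, 2, 1]

/-- `w` avoids the pattern 132. -/
def Avoids132 {n : ℕ} (w : Equiv.Perm (Fin n)) : Prop :=
  ¬ Contains (fun i => w i) pat132

/-- Pattern containment between permutations. -/
def ContainsP {n k : ℕ} (w : Equiv.Perm (Fin n)) (p : Equiv.Perm (Fin k)) : Prop :=
  Contains (fun i => w i) (fun i => p i)

/-- `w` is (up-down) alternating: `w 0 < w 1 > w 2 < w 3 > ⋯` (0-indexed). -/
def Alternating {m : ℕ} (w : Equiv.Perm (Fin m)) : Prop :=
  ∀ i : ℕ, ∀ h : i + 1 < m,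
    (i % 2 = 0 → w ⟨i, by omega⟩ < w ⟨i + 1, h⟩) ∧
    (i % 2 = 1 → w ⟨i + 1, h⟩ < w ⟨i, by omega⟩)

/-- The even-indexed (in 1-indexed terms: `w₂, w₄, …, w₂ₙ`) entries of `w`
are order-isomorphic to `u`. -/
def OrderIsoEven {n : ℕ} (w : Equiv.Perm (Fin (2 * n + 1))) (u : Equiv.Perm (Fin n)) : Prop :=
  ∀ i j : Fin n, u i < u j ↔
    w ⟨2 * (i : ℕ) + 1, by have := i.isLt; omega⟩ < w ⟨2 * (j : ℕ) + 1, by have := j.isLt; omega⟩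

/-!
A 132-avoiding permutation `w` of `{0, …, m}` whose maximum `m` sits at position `a` splits as
`w = (w₁ ⊕ 1) ⊖ w₂`: every entry left of the maximum exceeds every entry right of it (otherwise
these two entries and the maximum form a 132), so `w` is `w₁` shifted up by `m - a`, then `m`, then
`w₂`, where `w₁` and `w₂` are arbitrary 132-avoiding permutations of lengths `a` and `m - a`. This
gives the Catalan recurrence `s_{m+1} = ∑ₐ s_a s_{m-a}`. An alternating permutation of odd length
`2n + 3` has its maximum at an odd position `2k + 1` (0-indexed), and then `w` is alternating iff
`w₁` and `w₂`, of odd lengths `2k + 1` and `2(n - k) + 1`, are; so `a_{2n+1}` satisfies the same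
recurrence.
-/

open Finset

theorem contains_pat132_iff {α : Type*} [Preorder α] {n : ℕ} (w : Fin n → α) :
    Contains w pat132 ↔ ∃ i j k, i < j ∧ j < k ∧ w i < w k ∧ w k < w j := by
  constructor
  · rintro ⟨f, hf, hiff⟩
    exact ⟨f 0, f 1, f 2, hf (by decide), hf (by decide), (hiff 0 2).1 (by decide),
      (hiff 2 1).1 (by decide)⟩
  · rintro ⟨i, j, k, hij, hjk, hik, hkj⟩
    refine ⟨![i, j, k], ?_, ?_⟩
    · intro s t hst
      fin_cases s <;> fin_cases t <;>
        first | exact absurd hst (by decide) | simp [hij, hjk, hij.trans hjk]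
    · intro s t
      have hij' := hik.trans hkj
      fin_cases s <;> fin_cases t <;>
        simp [pat132, hik, hkj, hij', hik.not_gt, hkj.not_gt, hij'.not_gt]

namespace Equiv.Perm

variable {n : ℕ}

/-- `w` in one-line notation, extended by the junk value `0` past the end. -/
def natSeq (w : Perm (Fin n)) (i : ℕ) : ℕ := if h : i < n then w ⟨i, h⟩ else 0

theorem natSeq_of_lt (w : Perm (Fin n)) {i : ℕ} (hi : i < n) : w.natSeq i = w ⟨i, hi⟩ :=
  dif_pos hi

@[simp]
theorem natSeq_coe (w : Perm (Fin n)) (i : Fin n) : w.natSeq i = w i :=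
  w.natSeq_of_lt i.2

theorem natSeq_lt (w : Perm (Fin n)) {i : ℕ} (hi : i < n) : w.natSeq i < n := by
  simp [w.natSeq_of_lt hi]

theorem natSeq_injOn (w : Perm (Fin n)) : Set.InjOn w.natSeq (Set.Iio n) := by
  intro i hi j hj h
  rw [w.natSeq_of_lt hi, w.natSeq_of_lt hj] at h
  simpa using congrArg Fin.val (w.injective (Fin.ext h))

theorem ext_natSeq {w w' : Perm (Fin n)} (h : ∀ i < n, w.natSeq i = w'.natSeq i) : w = w' := by
  ext i
  simpa using h i i.2

noncomputable def ofSeq (f : ℕ → ℕ) (hf : Set.MapsTo f (Set.Iio n) (Set.Iio n))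
    (hinj : Set.InjOn f (Set.Iio n)) : Perm (Fin n) :=
  Equiv.ofBijective (fun i => ⟨f i, hf i.2⟩) <| Finite.injective_iff_bijective.mp
    fun i j h => Fin.ext (hinj i.2 j.2 (congrArg Fin.val h))

theorem natSeq_ofSeq {f : ℕ → ℕ} (hf : Set.MapsTo f (Set.Iio n) (Set.Iio n))
    (hinj : Set.InjOn f (Set.Iio n)) {i : ℕ} (hi : i < n) : (ofSeq f hf hinj).natSeq i = f i := by
  rw [natSeq_of_lt _ hi]
  rfl

theorem avoids132_iff_natSeq (w : Perm (Fin n)) :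
    Avoids132 w ↔ ∀ i j k, i < j → j < k → k < n →
      ¬ (w.natSeq i < w.natSeq k ∧ w.natSeq k < w.natSeq j) := by
  rw [Avoids132, contains_pat132_iff]
  constructor
  · rintro hw i j k hij hjk hk ⟨hik, hkj⟩
    simp only [natSeq_of_lt w hk, natSeq_of_lt w (show i < n by omega),
      natSeq_of_lt w (show j < n by omega)] at hik hkj
    exact hw ⟨⟨i, by omega⟩, ⟨j, by omega⟩, ⟨k, hk⟩, hij, hjk, hik, hkj⟩
  · rintro hw ⟨i, j, k, hij, hjk, hik, hkj⟩
    exact hw i j k hij hjk k.2 (by simpa using ⟨hik, hkj⟩)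

theorem alternating_iff_natSeq (w : Perm (Fin n)) :
    Alternating w ↔ ∀ i, i + 1 < n →
      (i % 2 = 0 → w.natSeq i < w.natSeq (i + 1)) ∧
        (i % 2 = 1 → w.natSeq (i + 1) < w.natSeq i) := by
  refine forall_congr' fun i => forall_congr' fun hi => ?_
  rw [natSeq_of_lt w hi, natSeq_of_lt w (Nat.lt_of_succ_lt hi)]
  rfl

theorem card_filter_apply_lt (w : Perm (Fin n)) (x : Fin n) : #{i | w i < x} = x := by
  have : ({i | w i < x} : Finset (Fin n)) = (Iio x).map w.symm.toEmbedding := by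
    ext i
    simp only [mem_filter, mem_univ, true_and, mem_map_equiv, symm_symm, mem_Iio]
  rw [this, card_map, Fin.card_Iio]


variable {m : ℕ} {a : Fin (m + 1)} {w₁ : Perm (Fin a)} {w₂ : Perm (Fin (m - a))}

variable (a w₁ w₂) in
def glueSeq (i : ℕ) : ℕ :=
  if i < a then w₁.natSeq i + (m - a) else if i = a then m else w₂.natSeq (i - (a + 1))

theorem mapsTo_glueSeq : Set.MapsTo (glueSeq a w₁ w₂) (Set.Iio (m + 1)) (Set.Iio (m + 1)) := by
  intro i (hi : i < m + 1)
  have ha := a.is_lt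
  simp only [glueSeq, Set.mem_Iio]
  split_ifs with hia
  · have := w₁.natSeq_lt hia; omega
  · omega
  · have := w₂.natSeq_lt (show i - (a + 1) < m - a by omega); omega

theorem injOn_glueSeq : Set.InjOn (glueSeq a w₁ w₂) (Set.Iio (m + 1)) := by
  intro i (hi : i < m + 1) j (hj : j < m + 1) h
  have ha := a.is_lt
  have hi₁ : i < a → w₁.natSeq i < a := w₁.natSeq_lt
  have hj₁ : j < a → w₁.natSeq j < a := w₁.natSeq_lt
  have hi₂ : a < i → w₂.natSeq (i - (a + 1)) < m - a := fun _ => w₂.natSeq_lt (by omega)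
  have hj₂ : a < j → w₂.natSeq (j - (a + 1)) < m - a := fun _ => w₂.natSeq_lt (by omega)
  simp only [glueSeq] at h
  split_ifs at h with hia hja
  · exact w₁.natSeq_injOn hia hja (by omega)
  all_goals first
    | omega
    | have := w₂.natSeq_injOn (by simp; omega) (by simp; omega) h; omega

variable (a w₁ w₂) in
noncomputable def glue : Perm (Fin (m + 1)) :=
  ofSeq (glueSeq a w₁ w₂) mapsTo_glueSeq injOn_glueSeq

theorem natSeq_glue_of_lt {i : ℕ} (hi : i < a) :
    (glue a w₁ w₂).natSeq i = w₁.natSeq i + (m - a) := by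
  rw [glue, natSeq_ofSeq _ _ (by omega), glueSeq, if_pos hi]

theorem natSeq_glue_self : (glue a w₁ w₂).natSeq a = m := by
  rw [glue, natSeq_ofSeq _ _ a.is_lt, glueSeq, if_neg (lt_irrefl _), if_pos rfl]

theorem natSeq_glue_of_gt {i : ℕ} (hi : a < i) (hi' : i < m + 1) :
    (glue a w₁ w₂).natSeq i = w₂.natSeq (i - (a + 1)) := by
  rw [glue, natSeq_ofSeq _ _ hi', glueSeq, if_neg (by omega), if_neg (by omega)]

theorem natSeq_glue_add {i : ℕ} (hi : i < m - a) :
    (glue a w₁ w₂).natSeq (a + 1 + i) = w₂.natSeq i := by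
  rw [natSeq_glue_of_gt (by omega) (by omega), Nat.add_sub_cancel_left]

theorem glue_inj {w₁' : Perm (Fin a)} {w₂' : Perm (Fin (m - a))} :
    glue a w₁ w₂ = glue a w₁' w₂' ↔ w₁ = w₁' ∧ w₂ = w₂' := by
  refine ⟨fun h => ⟨ext_natSeq fun i hi => ?_, ext_natSeq fun i hi => ?_⟩,
    fun h => h.1 ▸ h.2 ▸ rfl⟩
  · have := congrArg (natSeq · i) h
    simp only [natSeq_glue_of_lt hi] at this
    omega
  · simpa only [natSeq_glue_add hi] using congrArg (natSeq · (a + 1 + i)) h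

def maxPos (w : Perm (Fin (m + 1))) : Fin (m + 1) := w.symm (Fin.last m)

@[simp]
theorem apply_maxPos (w : Perm (Fin (m + 1))) : w w.maxPos = Fin.last m :=
  w.apply_symm_apply _

theorem natSeq_maxPos (w : Perm (Fin (m + 1))) : w.natSeq w.maxPos = m := by
  simp

@[simp]
theorem maxPos_glue : (glue a w₁ w₂).maxPos = a := by
  rw [maxPos, symm_apply_eq, Fin.ext_iff, ← natSeq_coe, natSeq_glue_self, Fin.val_last]

theorem exists_glue_of_natSeq {w : Perm (Fin (m + 1))}
    (hpre : ∀ i < (a : ℕ), m - a ≤ w.natSeq i)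
    (hsuf : ∀ i : ℕ, a < i → i < m + 1 → w.natSeq i < m - a) (hmax : w.natSeq a = m) :
    ∃ w₁ w₂, glue a w₁ w₂ = w := by
  have ha := a.is_lt
  have hpre' : ∀ i < (a : ℕ), w.natSeq i < m := fun i hi => by
    have := w.natSeq_lt (show i < m + 1 by omega)
    have := mt (w.natSeq_injOn (Set.mem_Iio.2 (show i < m + 1 by omega)) ha) hi.ne
    omega
  have maps₁ : Set.MapsTo (fun i => w.natSeq i - (m - a)) (Set.Iio a) (Set.Iio a) := by
    intro i hi
    simp only [Set.mem_Iio] at hi ⊢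
    have := hpre' i hi
    omega
  have inj₁ : Set.InjOn (fun i => w.natSeq i - (m - a)) (Set.Iio a) := by
    intro i hi j hj h
    simp only [Set.mem_Iio] at hi hj h
    have := hpre i hi
    have := hpre j hj
    exact w.natSeq_injOn (Set.mem_Iio.2 (by omega)) (Set.mem_Iio.2 (by omega)) (by omega)
  have maps₂ :
      Set.MapsTo (fun i => w.natSeq (a + 1 + i)) (Set.Iio (m - a)) (Set.Iio (m - a)) := by
    intro i hi
    simp only [Set.mem_Iio] at hi ⊢
    exact hsuf _ (by omega) (by omega)
  have inj₂ : Set.InjOn (fun i => w.natSeq (a + 1 + i)) (Set.Iio (m - a)) := by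
    intro i hi j hj h
    simp only [Set.mem_Iio] at hi hj
    have := w.natSeq_injOn (Set.mem_Iio.2 (by omega)) (Set.mem_Iio.2 (by omega)) h
    omega
  refine ⟨ofSeq _ maps₁ inj₁, ofSeq _ maps₂ inj₂, ext_natSeq fun i hi => ?_⟩
  rcases lt_trichotomy i a with h | rfl | h
  · rw [natSeq_glue_of_lt h, natSeq_ofSeq _ _ h]
    have := hpre i h
    omega
  · rw [natSeq_glue_self, hmax]
  · rw [natSeq_glue_of_gt h hi, natSeq_ofSeq _ _ (by omega)]
    congr 1
    omega

theorem sub_le_natSeq_glue {i : ℕ} (hi : i ≤ a) : m - a ≤ (glue a w₁ w₂).natSeq i := by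
  rcases hi.lt_or_eq with hi | rfl
  · rw [natSeq_glue_of_lt hi]
    omega
  · rw [natSeq_glue_self]
    omega

theorem natSeq_glue_lt_sub {i : ℕ} (hi : a < i) (hi' : i < m + 1) :
    (glue a w₁ w₂).natSeq i < m - a := by
  rw [natSeq_glue_of_gt hi hi']
  exact w₂.natSeq_lt (by omega)

theorem avoids132_glue_iff : Avoids132 (glue a w₁ w₂) ↔ Avoids132 w₁ ∧ Avoids132 w₂ := by
  simp only [avoids132_iff_natSeq]
  have ha := a.is_lt
  refine ⟨fun h => ⟨fun i j k hij hjk hk => ?_, fun i j k hij hjk hk => ?_⟩,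
    fun ⟨h₁, h₂⟩ i j k hij hjk hk => ?_⟩
  · have := h i j k hij hjk (by omega)
    simpa (disch := omega) only [natSeq_glue_of_lt, add_lt_add_iff_right] using this
  · have := h (a + 1 + i) (a + 1 + j) (a + 1 + k) (by omega) (by omega) (by omega)
    simpa (disch := omega) only [natSeq_glue_add] using this
  · rcases lt_trichotomy k a with hka | rfl | hka
    · simpa (disch := omega) only [natSeq_glue_of_lt, add_lt_add_iff_right]
        using h₁ i j k hij hjk hka
    · have := (glue a w₁ w₂).natSeq_lt (show j < m + 1 by omega)
      rw [natSeq_glue_self]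
      omega
    · by_cases hia : a < i
      · simpa (disch := omega) only [natSeq_glue_of_gt]
          using h₂ (i - (a + 1)) (j - (a + 1)) (k - (a + 1)) (by omega) (by omega) (by omega)
      · have := sub_le_natSeq_glue (w₁ := w₁) (w₂ := w₂) (not_lt.1 hia)
        have := natSeq_glue_lt_sub (w₁ := w₁) (w₂ := w₂) hka hk
        omega

theorem alternating_glue_iff (ha : (a : ℕ) % 2 = 1) :
    Alternating (glue a w₁ w₂) ↔ Alternating w₁ ∧ Alternating w₂ := by
  simp only [alternating_iff_natSeq]
  have ha' := a.is_lt
  refine ⟨fun h => ⟨fun i hi => ?_, fun i hi => ?_⟩, fun ⟨h₁, h₂⟩ i hi => ?_⟩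
  · simpa (disch := omega) only [natSeq_glue_of_lt, add_lt_add_iff_right] using h i (by omega)
  · have := h (a + 1 + i) (by omega)
    rw [add_assoc _ i 1] at this
    simp (disch := omega) only [natSeq_glue_add] at this
    omega
  · rcases lt_trichotomy (i + 1) a with hia | hia | hia
    · simpa (disch := omega) only [natSeq_glue_of_lt, add_lt_add_iff_right] using h₁ i hia
    · have := w₁.natSeq_lt (show i < a by omega)
      rw [natSeq_glue_of_lt (by omega), hia, natSeq_glue_self]
      omega
    · rcases (Nat.lt_succ_iff.1 hia).eq_or_lt with rfl | hia
      · have := natSeq_glue_lt_sub (w₁ := w₁) (w₂ := w₂) (i := a + 1) (by omega) hi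
        rw [natSeq_glue_self]
        omega
      · have := h₂ (i - (a + 1)) (by omega)
        rw [natSeq_glue_of_gt hia (by omega), natSeq_glue_of_gt (by omega) hi,
          show i + 1 - (a + 1) = i - (a + 1) + 1 by omega]
        omega

end Equiv.Perm

namespace Avoids132

open Equiv.Perm

variable {m : ℕ} {w : Perm (Fin (m + 1))}

theorem apply_lt_apply (hw : Avoids132 w) {i j : Fin (m + 1)} (hi : i < w.maxPos)
    (hj : w.maxPos < j) : w j < w i := by
  by_contra! h
  refine hw ((contains_pat132_iff _).2 ⟨i, w.maxPos, j, hi, hj, ?_, ?_⟩)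
  · exact h.lt_of_ne (w.injective.ne (hi.trans hj).ne)
  · rw [apply_maxPos]
    exact (Fin.le_last _).lt_of_ne (by rw [← w.apply_maxPos]; exact w.injective.ne hj.ne')

theorem apply_lt_sub_maxPos (hw : Avoids132 w) {j : Fin (m + 1)} (hj : w.maxPos < j) :
    (w j : ℕ) < m - w.maxPos := by
  -- `w j` is the number of entries below it, and all of them lie right of the maximum.
  have hsub : ({i | w i < w j} : Finset _) ⊆ (Ioi w.maxPos).erase j := by
    intro i hi
    simp only [mem_filter, mem_univ, true_and] at hi
    refine mem_erase.2 ⟨fun h => (h ▸ hi).false, mem_Ioi.2 ?_⟩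
    rcases lt_trichotomy i w.maxPos with h | rfl | h
    · exact absurd (hw.apply_lt_apply h hj) hi.not_gt
    · exact absurd (w.apply_maxPos ▸ hi) (Fin.le_last _).not_gt
    · exact h
  have := card_le_card hsub
  rw [card_filter_apply_lt, card_erase_of_mem (mem_Ioi.2 hj), Fin.card_Ioi] at this
  have := w.maxPos.is_lt
  omega

theorem sub_maxPos_le_apply (hw : Avoids132 w) {i : Fin (m + 1)} (hi : i < w.maxPos) :
    m - w.maxPos ≤ (w i : ℕ) := by
  have hsub : Ioi w.maxPos ⊆ ({j | w j < w i} : Finset _) := fun j hj =>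
    mem_filter.2 ⟨mem_univ _, hw.apply_lt_apply hi (mem_Ioi.1 hj)⟩
  have := card_le_card hsub
  rwa [card_filter_apply_lt, Fin.card_Ioi, Nat.add_sub_cancel] at this

theorem exists_glue (hw : Avoids132 w) : ∃ w₁ w₂, glue w.maxPos w₁ w₂ = w := by
  refine exists_glue_of_natSeq (fun i hi => ?_) (fun i hi hi' => ?_) w.natSeq_maxPos
  · have hi' : i < m + 1 := hi.trans w.maxPos.is_lt
    simpa [natSeq_of_lt w hi'] using hw.sub_maxPos_le_apply (i := ⟨i, hi'⟩) hi
  · simpa [natSeq_of_lt w hi'] using hw.apply_lt_sub_maxPos (j := ⟨i, hi'⟩) hi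

end Avoids132

theorem Alternating.maxPos_odd {m : ℕ} {w : Equiv.Perm (Fin (m + 1))} (hw : Alternating w)
    (hm : m % 2 = 0) (hm₀ : m ≠ 0) : (w.maxPos : ℕ) % 2 = 1 := by
  -- An even position starts an ascent, unless it is the last one, which ends a descent.
  rw [Equiv.Perm.alternating_iff_natSeq] at hw
  have hmax := w.natSeq_maxPos
  have hp := w.maxPos.is_lt
  by_contra hodd
  rcases (Nat.lt_succ_iff.1 hp).lt_or_eq with hp | hp
  · have := w.natSeq_lt (show (w.maxPos : ℕ) + 1 < m + 1 by omega)
    have := (hw w.maxPos (by omega)).1 (by omega)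
    omega
  · have := w.natSeq_lt (show m - 1 < m + 1 by omega)
    have := (hw (m - 1) (by omega)).2 (by omega)
    rw [Nat.sub_add_cancel (by omega)] at this
    rw [hp] at hmax
    omega

open Equiv.Perm

theorem avoids132_of_lt_three {n : ℕ} (hn : n < 3) (w : Perm (Fin n)) : Avoids132 w := by
  rintro ⟨f, hf, -⟩
  have := Fintype.card_le_of_injective f hf.injective
  simp only [Fintype.card_fin] at this
  omega

theorem card_eq_sum_card_maxPos {m : ℕ} (P : Perm (Fin (m + 1)) → Prop) :
    Nat.card {w // P w} = ∑ a, Nat.card {w // P w ∧ w.maxPos = a} := by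
  rw [← Nat.card_sigma]
  exact Nat.card_congr ((sigmaFiberEquiv fun w : {w // P w} => w.1.maxPos).symm.trans
    (sigmaCongrRight fun a => subtypeSubtypeEquivSubtypeInter P (·.maxPos = a)))

theorem card_maxPos_eq_mul {m : ℕ} (P : (k : ℕ) → Perm (Fin k) → Prop) (a : Fin (m + 1))
    (hP : ∀ w₁ w₂, P (m + 1) (glue a w₁ w₂) ↔ P a w₁ ∧ P (m - a) w₂)
    (hav : ∀ w, P (m + 1) w → Avoids132 w) :
    Nat.card {w // P (m + 1) w ∧ w.maxPos = a} =
      Nat.card {w // P a w} * Nat.card {w // P (m - a) w} := by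
  rw [← Nat.card_prod]
  symm
  refine Nat.card_congr (Equiv.ofBijective
    (fun p => ⟨glue a p.1 p.2, (hP _ _).2 ⟨p.1.2, p.2.2⟩, maxPos_glue⟩) ⟨?_, ?_⟩)
  · rintro ⟨⟨w₁, _⟩, ⟨w₂, _⟩⟩ ⟨⟨w₁', _⟩, ⟨w₂', _⟩⟩ h
    obtain ⟨rfl, rfl⟩ := glue_inj.1 (congrArg Subtype.val h)
    rfl
  · rintro ⟨w, hw, rfl⟩
    obtain ⟨w₁, w₂, hglue⟩ := (hav w hw).exists_glue
    rw [← hglue] at hw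
    exact ⟨⟨⟨w₁, ((hP _ _).1 hw).1⟩, ⟨w₂, ((hP _ _).1 hw).2⟩⟩, Subtype.ext hglue⟩

theorem card_avoids132_succ (m : ℕ) :
    Nat.card {w : Perm (Fin (m + 1)) // Avoids132 w} =
      ∑ a : Fin (m + 1), Nat.card {w : Perm (Fin a) // Avoids132 w} *
        Nat.card {w : Perm (Fin (m - a)) // Avoids132 w} := by
  rw [card_eq_sum_card_maxPos]
  exact Finset.sum_congr rfl fun a _ =>
    card_maxPos_eq_mul (fun _ w => Avoids132 w) a (fun _ _ => avoids132_glue_iff) fun _ => id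

theorem card_alternating_avoids132_succ (n : ℕ) :
    Nat.card {w : Perm (Fin (2 * (n + 1) + 1)) // Alternating w ∧ Avoids132 w} =
      ∑ k : Fin (n + 1), Nat.card {w : Perm (Fin (2 * k + 1)) // Alternating w ∧ Avoids132 w} *
        Nat.card {w : Perm (Fin (2 * (n - k) + 1)) // Alternating w ∧ Avoids132 w} := by
  rw [card_eq_sum_card_maxPos]
  symm
  refine Fintype.sum_of_injective
    (fun k : Fin (n + 1) => (⟨2 * k + 1, by omega⟩ : Fin (2 * (n + 1) + 1)))
    (fun k l h => Fin.ext (by simpa using h)) _ _ (fun a ha => ?_) (fun k => ?_)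
  · have : IsEmpty {w // (Alternating w ∧ Avoids132 w) ∧ w.maxPos = a} :=
      ⟨fun ⟨w, ⟨halt, _⟩, hmax⟩ => by
        have := hmax ▸ halt.maxPos_odd (by omega) (by omega)
        have := a.is_lt
        exact ha ⟨⟨a / 2, by omega⟩, Fin.ext (by simp; omega)⟩⟩
    exact Nat.card_of_isEmpty
  · rw [card_maxPos_eq_mul (fun _ w => Alternating w ∧ Avoids132 w) _
      (fun _ _ => ((alternating_glue_iff (by simp)).and avoids132_glue_iff).trans
        and_and_and_comm) fun _ h => h.2]
    dsimp only
    rw [show 2 * (n + 1) - (2 * k + 1) = 2 * (n - k) + 1 by omega]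

theorem card_avoids132 (n : ℕ) : Nat.card {w : Perm (Fin n) // Avoids132 w} = catalan n := by
  induction n using Nat.strong_induction_on with
  | _ n ih =>
    rcases n with _ | m
    · rw [Nat.card_congr (subtypeUnivEquiv (avoids132_of_lt_three (by omega))), Nat.card_perm]
      simp
    · rw [card_avoids132_succ, catalan_succ]
      exact Finset.sum_congr rfl fun a _ => by rw [ih a (by omega), ih (m - a) (by omega)]

theorem card_alternating_avoids132 (n : ℕ) :
    Nat.card {w : Perm (Fin (2 * n + 1)) // Alternating w ∧ Avoids132 w} = catalan n := by
  induction n using Nat.strong_induction_on with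
  | _ n ih =>
    rcases n with _ | n
    · have hall (w : Perm (Fin 1)) : Alternating w ∧ Avoids132 w :=
        ⟨fun i hi => by omega, avoids132_of_lt_three (by omega) w⟩
      rw [Nat.card_congr (subtypeUnivEquiv hall), Nat.card_perm]
      simp
    · rw [card_alternating_avoids132_succ, catalan_succ]
      exact Finset.sum_congr rfl fun k _ => by rw [ih k (by omega), ih (n - k) (by omega)]

/-- `a_{2n+1}(132)` equals the Catalan number `C_n`, hence equals
`s_n(132)`. -/
theorem stmt5 (n : ℕ) :
    Nat.card {w : Equiv.Perm (Fin (2 * n + 1)) // Alternating w ∧ Avoids132 w} =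
      Nat.choose (2 * n) n / (n + 1) ∧
    Nat.card {w : Equiv.Perm (Fin (2 * n + 1)) // Alternating w ∧ Avoids132 w} =
      Nat.card {w : Equiv.Perm (Fin n) // Avoids132 w} := by
  rw [card_alternating_avoids132, card_avoids132, catalan_eq_centralBinom_div, Nat.centralBinom]
  exact ⟨rfl, rfl⟩
end

section
/- Let φ: S_n(132) → A_{2n+1}(132) be the bijection with even-indexed entries of φ(w) order-isomorphic to w. Then for any 132-avoiding pattern p, w contains p if and only if φ(w) contains φ(p). Consequently, for any 132-avoiding patterns p_1,...,p_k, φ restricts to a bijection from S_n(132, p_1,...,p_k) to A_{2n+1}(132, φ(p_1),...,φ(p_k)). -/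
open Equiv

/-!
In an alternating 132-avoiding permutation `z` of length `2m + 1` whose peaks are
order-isomorphic to `u`, every valley is smaller than everything to its left, and the valley
just before peak `j` lies below peak `i ≥ j` exactly when `u j ≤ u i`. So the order type of `z`
is determined by `u`. An occurrence `g` of `p` in `w` therefore lifts to an occurrence of `φ(p)`
in `φ(w)` sending peak `i` to peak `g i`, the valley before it to the valley before `g i`, and
the last valley to the last valley. Conversely an occurrence of `φ(p)` in `φ(w)` must send
peaks to peaks (a peak exceeds the entry before it, a valley cannot), and its restriction to
the peaks is an occurrence of `p` in `w`.
-/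

lemma contains_pat132 {α : Type*} [Preorder α] {M : ℕ} {v : Fin M → α} {a b c : Fin M}
    (hab : a < b) (hbc : b < c) (hac : v a < v c) (hcb : v c < v b) : Contains v pat132 := by
  refine ⟨![a, b, c], ?_, ?_⟩
  · refine Fin.strictMono_iff_lt_succ.mpr fun i => ?_
    fin_cases i
    exacts [hab, hbc]
  · have hab' : v a < v b := hac.trans hcb
    intro i j
    fin_cases i <;> fin_cases j <;>
      simp [pat132, hac, hcb, hab', lt_asymm hac, lt_asymm hcb, lt_asymm hab']

section Positions

variable {m : ℕ}

def peakPos (i : Fin m) : Fin (2 * m + 1) := ⟨2 * i + 1, by omega⟩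

def valleyPos (j : Fin (m + 1)) : Fin (2 * m + 1) := ⟨2 * j, by omega⟩

@[simp] lemma val_peakPos (i : Fin m) : (peakPos i : ℕ) = 2 * i + 1 := rfl

@[simp] lemma val_valleyPos (j : Fin (m + 1)) : (valleyPos j : ℕ) = 2 * j := rfl

lemma peakPos_strictMono : StrictMono (peakPos (m := m)) := fun i j h => by
  simp only [Fin.lt_def, val_peakPos] at *; omega

lemma valleyPos_strictMono : StrictMono (valleyPos (m := m)) := fun i j h => by
  simp only [Fin.lt_def, val_valleyPos] at *; omega

lemma peakPos_lt_valleyPos_iff {i : Fin m} {j : Fin (m + 1)} :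
    peakPos i < valleyPos j ↔ i.castSucc < j := by
  simp only [Fin.lt_def, val_peakPos, val_valleyPos, Fin.val_castSucc]; omega

lemma valleyPos_lt_peakPos_iff {i : Fin m} {j : Fin (m + 1)} :
    valleyPos j < peakPos i ↔ j ≤ i.castSucc := by
  simp only [Fin.lt_def, Fin.le_def, val_peakPos, val_valleyPos, Fin.val_castSucc]; omega

lemma peakPos_ne_valleyPos (i : Fin m) (j : Fin (m + 1)) : peakPos i ≠ valleyPos j :=
  fun h => by have := congrArg Fin.val h; simp only [val_peakPos, val_valleyPos] at this; omega

lemma exists_peakPos_or_valleyPos (q : Fin (2 * m + 1)) :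
    (∃ i, peakPos i = q) ∨ ∃ j, valleyPos j = q := by
  rcases Nat.even_or_odd' q with ⟨t, ht | ht⟩
  · exact .inr ⟨⟨t, by omega⟩, Fin.ext ht.symm⟩
  · exact .inl ⟨⟨t, by omega⟩, Fin.ext ht.symm⟩

end Positions

namespace Alternating

variable {m : ℕ} {z : Perm (Fin (2 * m + 1))}

lemma valleyPos_castSucc_lt (h : Alternating z) (i : Fin m) :
    z (valleyPos i.castSucc) < z (peakPos i) :=
  (h (2 * i) (by omega)).1 (by omega)

lemma valleyPos_succ_lt (h : Alternating z) (i : Fin m) :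
    z (valleyPos i.succ) < z (peakPos i) := by
  have := (h (2 * i + 1) (by omega)).2 (by omega)
  convert this using 3 <;> simp only [val_valleyPos, val_peakPos, Fin.val_succ]; omega

/-- Valleys are left-to-right minima: otherwise the valley, the peak just before it and an
earlier smaller entry form a 132. -/
lemma valleyPos_lt_of_lt (h : Alternating z) (hz : Avoids132 z) {a : Fin (2 * m + 1)}
    {j : Fin (m + 1)} (ha : a < valleyPos j) : z (valleyPos j) < z a := by
  obtain ⟨i, rfl⟩ : ∃ i : Fin m, i.succ = j :=
    Fin.exists_succ_eq.mpr fun hj => by simp [hj, Fin.lt_def] at ha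
  have hai : a ≤ peakPos i := by
    simp only [Fin.lt_def, Fin.le_def, val_valleyPos, val_peakPos, Fin.val_succ] at ha ⊢; omega
  rcases hai.eq_or_lt with rfl | hlt
  · exact h.valleyPos_succ_lt i
  · exact (lt_or_gt_of_ne (z.injective.ne (ne_of_gt ha))).resolve_right fun hlt' =>
      hz (contains_pat132 hlt (peakPos_lt_valleyPos_iff.mpr Fin.castSucc_lt_succ) hlt'
        (h.valleyPos_succ_lt i))

lemma valleyPos_lt_valleyPos_iff (h : Alternating z) (hz : Avoids132 z) {j j' : Fin (m + 1)} :
    z (valleyPos j) < z (valleyPos j') ↔ valleyPos j' < valleyPos j :=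
  ⟨fun hlt => (lt_or_gt_of_ne fun hjj' => by simp [hjj'] at hlt).resolve_right fun hjj' =>
      lt_asymm hlt (h.valleyPos_lt_of_lt hz hjj'),
    h.valleyPos_lt_of_lt hz⟩

lemma valleyPos_lt_peakPos_of_lt (h : Alternating z) (hz : Avoids132 z) {i : Fin m}
    {j : Fin (m + 1)} (hij : i.castSucc < j) : z (valleyPos j) < z (peakPos i) :=
  h.valleyPos_lt_of_lt hz (peakPos_lt_valleyPos_iff.mpr hij)

lemma exists_peakPos_eq_of_lt (h : Alternating z) (hz : Avoids132 z) {a b : Fin (2 * m + 1)}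
    (hab : a < b) (hzab : z a < z b) : ∃ i, peakPos i = b :=
  (exists_peakPos_or_valleyPos b).resolve_right fun ⟨_, hj⟩ =>
    lt_asymm hzab (hj ▸ h.valleyPos_lt_of_lt hz (hj ▸ hab))

end Alternating

structure IsPhiImage {m : ℕ} (z : Perm (Fin (2 * m + 1))) (u : Perm (Fin m)) : Prop where
  alternating : Alternating z
  avoids132 : Avoids132 z
  orderIsoEven : OrderIsoEven z u

namespace IsPhiImage

variable {m : ℕ} {z : Perm (Fin (2 * m + 1))} {u : Perm (Fin m)}

lemma peakPos_lt_peakPos_iff (hz : IsPhiImage z u) (i j : Fin m) :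
    z (peakPos i) < z (peakPos j) ↔ u i < u j :=
  (hz.orderIsoEven i j).symm

lemma valleyPos_castSucc_lt_peakPos_iff (hz : IsPhiImage z u) {j i : Fin m} (hji : j ≤ i) :
    z (valleyPos j.castSucc) < z (peakPos i) ↔ u j ≤ u i := by
  refine ⟨fun h => ?_, fun h => ?_⟩
  · by_contra! hij
    have hji' : j < i := hji.lt_of_ne (by rintro rfl; exact lt_irrefl _ hij)
    exact hz.avoids132 (contains_pat132 (valleyPos_lt_peakPos_iff.mpr le_rfl)
      (peakPos_strictMono hji') h ((hz.peakPos_lt_peakPos_iff i j).mpr hij))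
  · rcases h.lt_or_eq with hlt | heq
    · exact (hz.alternating.valleyPos_castSucc_lt j).trans ((hz.peakPos_lt_peakPos_iff j i).mpr hlt)
    · rw [u.injective heq]; exact hz.alternating.valleyPos_castSucc_lt i

end IsPhiImage

section PeakValleyMap

variable {k n : ℕ}

/-- Extends an embedding `g` of peak indices to positions: peak `i` goes to peak `g i`, the
valley before it to the valley before `g i`, and the last valley to the last valley. -/
def peakValleyMap (g : Fin k → Fin n) (q : Fin (2 * k + 1)) : Fin (2 * n + 1) :=
  if hq : (q : ℕ) < 2 * k then
    ⟨2 * g ⟨q / 2, by omega⟩ + q % 2, by have := (g ⟨q / 2, by omega⟩).isLt; omega⟩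
  else Fin.last (2 * n)

variable {g : Fin k → Fin n}

lemma strictMono_peakValleyMap (hg : StrictMono g) : StrictMono (peakValleyMap g) := by
  intro a b hab
  have hab' : (a : ℕ) < b := hab
  simp only [peakValleyMap]
  split_ifs with ha hb hb
  · have hle := hg.le_iff_le (a := ⟨a / 2, by omega⟩) (b := ⟨b / 2, by omega⟩)
    have hlt := hg.lt_iff_lt (a := ⟨a / 2, by omega⟩) (b := ⟨b / 2, by omega⟩)
    simp only [Fin.le_def, Fin.lt_def] at hle hlt
    simp only [Fin.lt_def]
    omega
  · simp only [Fin.lt_def, Fin.val_last]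
    have := (g ⟨a / 2, by omega⟩).isLt
    omega
  · omega
  · omega

lemma peakValleyMap_peakPos (i : Fin k) : peakValleyMap g (peakPos i) = peakPos (g i) := by
  have hi : (2 * (i : ℕ) + 1) / 2 = i := by omega
  simp [peakValleyMap, peakPos, hi, show 2 * (i : ℕ) + 1 < 2 * k by omega]

lemma peakValleyMap_valleyPos_castSucc (j : Fin k) :
    peakValleyMap g (valleyPos j.castSucc) = valleyPos (g j).castSucc := by
  have hj : 2 * (j : ℕ) / 2 = j := by omega
  simp [peakValleyMap, valleyPos, hj]

lemma peakValleyMap_valleyPos_last :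
    peakValleyMap g (valleyPos (Fin.last k)) = valleyPos (Fin.last n) := by
  simp [peakValleyMap, valleyPos, Fin.last]

lemma exists_peakValleyMap_valleyPos (j : Fin (k + 1)) :
    ∃ j', peakValleyMap g (valleyPos j) = valleyPos j' := by
  rcases j.eq_castSucc_or_eq_last with ⟨j, rfl⟩ | rfl
  exacts [⟨_, peakValleyMap_valleyPos_castSucc j⟩, ⟨_, peakValleyMap_valleyPos_last⟩]

end PeakValleyMap

section Transfer

variable {n k : ℕ} {w : Perm (Fin n)} {p : Perm (Fin k)} {φw : Perm (Fin (2 * n + 1))}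
  {φp : Perm (Fin (2 * k + 1))}

lemma valleyPos_lt_peakPos_iff_peakValleyMap (hw : IsPhiImage φw w) (hp : IsPhiImage φp p)
    {g : Fin k → Fin n} (hg : StrictMono g) (hgp : ∀ i j, p i < p j ↔ w (g i) < w (g j))
    (j : Fin (k + 1)) (i : Fin k) :
    φp (valleyPos j) < φp (peakPos i) ↔
      φw (peakValleyMap g (valleyPos j)) < φw (peakValleyMap g (peakPos i)) := by
  rw [peakValleyMap_peakPos]
  rcases j.eq_castSucc_or_eq_last with ⟨j, rfl⟩ | rfl
  · rw [peakValleyMap_valleyPos_castSucc]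
    rcases le_or_gt j i with hji | hij
    · rw [hp.valleyPos_castSucc_lt_peakPos_iff hji,
        hw.valleyPos_castSucc_lt_peakPos_iff (hg.monotone hji), ← not_lt, ← not_lt, hgp]
    · exact iff_of_true
        (hp.alternating.valleyPos_lt_peakPos_of_lt hp.avoids132 (Fin.castSucc_lt_castSucc_iff.mpr hij))
        (hw.alternating.valleyPos_lt_peakPos_of_lt hw.avoids132 (Fin.castSucc_lt_castSucc_iff.mpr (hg hij)))
  · rw [peakValleyMap_valleyPos_last]
    exact iff_of_true (hp.alternating.valleyPos_lt_peakPos_of_lt hp.avoids132 (Fin.castSucc_lt_last i))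
      (hw.alternating.valleyPos_lt_peakPos_of_lt hw.avoids132 (Fin.castSucc_lt_last _))

lemma containsP_phi_of_containsP (hw : IsPhiImage φw w) (hp : IsPhiImage φp p)
    (h : ContainsP w p) : ContainsP φw φp := by
  obtain ⟨g, hg, hgp⟩ := h
  have hvp := valleyPos_lt_peakPos_iff_peakValleyMap hw hp hg hgp
  have hF := strictMono_peakValleyMap hg
  refine ⟨peakValleyMap g, hF, fun x y => ?_⟩
  rcases exists_peakPos_or_valleyPos x with ⟨i, rfl⟩ | ⟨j, rfl⟩ <;>
    rcases exists_peakPos_or_valleyPos y with ⟨i', rfl⟩ | ⟨j', rfl⟩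
  · rw [peakValleyMap_peakPos, peakValleyMap_peakPos, hp.peakPos_lt_peakPos_iff,
      hw.peakPos_lt_peakPos_iff]
    exact hgp i i'
  · have hflip : ∀ {M} (z : Perm (Fin M)) {q r}, q ≠ r → (z q < z r ↔ ¬ z r < z q) :=
      fun z _ _ hqr => (not_lt.trans (z.injective.ne hqr).le_iff_lt).symm
    have hne := peakPos_ne_valleyPos i j'
    rw [hflip φp hne, hflip φw (hF.injective.ne hne), hvp j' i]
  · exact hvp j i'
  · obtain ⟨a, ha⟩ := exists_peakValleyMap_valleyPos (g := g) j
    obtain ⟨b, hb⟩ := exists_peakValleyMap_valleyPos (g := g) j'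
    rw [hp.alternating.valleyPos_lt_valleyPos_iff hp.avoids132, ← hF.lt_iff_lt, ha, hb,
      hw.alternating.valleyPos_lt_valleyPos_iff hw.avoids132]

lemma containsP_of_containsP_phi (hw : IsPhiImage φw w) (hp : IsPhiImage φp p)
    (h : ContainsP φw φp) : ContainsP w p := by
  obtain ⟨f, hf, hfp⟩ := h
  have hpeak : ∀ i, ∃ i', peakPos i' = f (peakPos i) := fun i =>
    hw.alternating.exists_peakPos_eq_of_lt hw.avoids132 (hf (valleyPos_lt_peakPos_iff.mpr le_rfl))
      ((hfp _ _).mp (hp.alternating.valleyPos_castSucc_lt i))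
  choose g hg using hpeak
  refine ⟨g, fun a b hab => ?_, fun i j => ?_⟩
  · rw [← peakPos_strictMono.lt_iff_lt, hg, hg]
    exact hf (peakPos_strictMono hab)
  · rw [← hp.peakPos_lt_peakPos_iff, hfp, ← hg, ← hg, hw.peakPos_lt_peakPos_iff]

lemma containsP_iff_containsP_phi (hw : IsPhiImage φw w) (hp : IsPhiImage φp p) :
    ContainsP w p ↔ ContainsP φw φp :=
  ⟨containsP_phi_of_containsP hw hp, containsP_of_containsP_phi hw hp⟩

end Transfer

theorem stmt13_general (n : ℕ) (w : Equiv.Perm (Fin n))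
    (φw : Equiv.Perm (Fin (2 * n + 1)))
    (hφ : Alternating φw ∧ Avoids132 φw ∧ OrderIsoEven φw w) :
    (∀ k : ℕ, ∀ p : Equiv.Perm (Fin k), Avoids132 p →
      ∀ φp : Equiv.Perm (Fin (2 * k + 1)),
        Alternating φp ∧ Avoids132 φp ∧ OrderIsoEven φp p →
        (ContainsP w p ↔ ContainsP φw φp)) ∧
    (∀ (ι : Type) (ms : ι → ℕ) (ps : (i : ι) → Equiv.Perm (Fin (ms i)))
        (_ : ∀ i, Avoids132 (ps i))
        (φps : (i : ι) → Equiv.Perm (Fin (2 * ms i + 1)))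
        (_ : ∀ i, Alternating (φps i) ∧ Avoids132 (φps i) ∧
              OrderIsoEven (φps i) (ps i)),
      ((∀ i, ¬ ContainsP w (ps i)) ↔ (∀ i, ¬ ContainsP φw (φps i)))) := by
  have hw : IsPhiImage φw w := ⟨hφ.1, hφ.2.1, hφ.2.2⟩
  have key : ∀ {k} {p : Perm (Fin k)} {φp : Perm (Fin (2 * k + 1))},
      Alternating φp ∧ Avoids132 φp ∧ OrderIsoEven φp p → (ContainsP w p ↔ ContainsP φw φp) :=
    fun ⟨halt, havoid, hiso⟩ => containsP_iff_containsP_phi hw ⟨halt, havoid, hiso⟩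
  exact ⟨fun _ _ _ _ hφp => key hφp, fun _ _ _ _ _ hφps =>
    forall_congr' fun i => not_congr (key (hφps i))⟩

/-- `w` contains a 132-avoiding pattern `p` iff `φ(w)` contains
`φ(p)`; consequently `φ` restricts to a bijection from
`S_n(132, p₁, …, p_k)` to `A_{2n+1}(132, φ(p₁), …, φ(p_k))`. -/
theorem stmt13 (n : ℕ) (w : Equiv.Perm (Fin n)) (hw : Avoids132 w)
    (φw : Equiv.Perm (Fin (2 * n + 1)))
    (hφ : Alternating φw ∧ Avoids132 φw ∧ OrderIsoEven φw w) :
    (∀ k : ℕ, ∀ p : Equiv.Perm (Fin k), Avoids132 p →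
      ∀ φp : Equiv.Perm (Fin (2 * k + 1)),
        Alternating φp ∧ Avoids132 φp ∧ OrderIsoEven φp p →
        (ContainsP w p ↔ ContainsP φw φp)) ∧
    (∀ (ι : Type) (ms : ι → ℕ) (ps : (i : ι) → Equiv.Perm (Fin (ms i)))
        (_ : ∀ i, Avoids132 (ps i))
        (φps : (i : ι) → Equiv.Perm (Fin (2 * ms i + 1)))
        (_ : ∀ i, Alternating (φps i) ∧ Avoids132 (φps i) ∧
              OrderIsoEven (φps i) (ps i)),
      ((∀ i, ¬ ContainsP w (ps i)) ↔ (∀ i, ¬ ContainsP φw (φps i)))) :=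
  stmt13_general n w φw hφ
end
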